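/- Let Ω be a bounded domain, and let (v_j) be a decreasing sequence of continuous functions on the closure of Ω converging pointwise to a continuous function on ∂Ω. Suppose there exist constants C > 0 and 0 < γ < 1 such that for all j, sup_Ω (v_j − U) ≤ sup_{∂Ω}(v_j − U) + C ‖v_j − U‖_{L¹(Ω)}^γ, where U is a bounded function with v_j ≥ U and v_j → U pointwise on Ω̄. Then v_j converges uniformly to U on Ω̄, and in particular U is continuous on Ω̄. -/

import Mathlib

open MeasureTheory Filter Topology

/-!
On the boundary, Dini's theorem makes `v j → U` uniform, so `sup_{∂Ω} (v j - U) → 0`.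
Since `0 ≤ v j - U ≤ v 0 - U` is bounded, bounded convergence gives `‖v j - U‖₁ → 0`, and
`γ > 0` turns this into `C ‖v j - U‖₁ ^ γ → 0`. The stability estimate then forces
`sup_Ω (v j - U) → 0`, i.e. uniform convergence on `closure Ω`, and `U` is continuous there
as a uniform limit of continuous functions.
-/

theorem tendstoUniformlyOn_iff_eventually_sub_lt {ι X : Type*} {l : Filter ι}
    {F : ι → X → ℝ} {f : X → ℝ} {s : Set X} (hle : ∀ i, ∀ x ∈ s, f x ≤ F i x) :
    TendstoUniformlyOn F f l s ↔ ∀ ε > 0, ∀ᶠ i in l, ∀ x ∈ s, F i x - f x < ε := by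
  rw [Metric.tendstoUniformlyOn_iff]
  refine forall₂_congr fun ε _ =>
    eventually_congr (.of_forall fun i => forall₂_congr fun x hx => ?_)
  rw [Real.dist_eq, abs_sub_comm, abs_of_nonneg (sub_nonneg.2 (hle i x hx))]

theorem le_add_of_sSup_image_le_sSup_image_add {X : Type*} {w : X → ℝ} {s t : Set X} {a r : ℝ}
    (hbdd : BddAbove (w '' s)) (ha : 0 ≤ a) (ht : ∀ y ∈ t, w y ≤ a)
    (hst : sSup (w '' s) ≤ sSup (w '' t) + r) {x : X} (hx : x ∈ s) :
    w x ≤ a + r :=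
  calc w x ≤ sSup (w '' s) := le_csSup hbdd ⟨x, hx, rfl⟩
    _ ≤ sSup (w '' t) + r := hst
    _ ≤ a + r := add_le_add_left (Real.sSup_le (Set.forall_mem_image.2 ht) ha) r

theorem IsCompact.exists_abs_sub_le_of_antitone {X : Type*} [TopologicalSpace X] {K : Set X}
    (hK : IsCompact K) {v : ℕ → X → ℝ} {U : X → ℝ} (hv₀ : ContinuousOn (v 0) K)
    (hanti : ∀ x ∈ K, Antitone (v · x)) (hge : ∀ j, ∀ x ∈ K, U x ≤ v j x)
    (hU : ∃ M, ∀ x ∈ K, |U x| ≤ M) :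
    ∃ B, ∀ j, ∀ x ∈ K, |v j x - U x| ≤ B := by
  obtain ⟨M, hM⟩ := hU
  obtain ⟨M₀, hM₀⟩ := hK.exists_bound_of_continuousOn hv₀
  refine ⟨M₀ + M, fun j x hx => ?_⟩
  rw [abs_of_nonneg (sub_nonneg.2 (hge j x hx))]
  have hvj : v j x ≤ v 0 x := hanti x hx (Nat.zero_le j)
  have hv0 : v 0 x ≤ M₀ := (le_abs_self _).trans (hM₀ x hx)
  have hUx : -M ≤ U x := (abs_le.1 (hM x hx)).1
  linarith

theorem tendsto_setIntegral_abs_sub_of_abs_sub_le {X : Type*} [TopologicalSpace X]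
    [MeasurableSpace X] [OpensMeasurableSpace X] {μ : Measure X} {s : Set X}
    (hs : MeasurableSet s) (hμs : μ s ≠ ⊤) {F : ℕ → X → ℝ} {f : X → ℝ}
    (hF : ∀ j, ContinuousOn (F j) s) {B : ℝ} (hB : ∀ j, ∀ x ∈ s, |F j x - f x| ≤ B)
    (hlim : ∀ x ∈ s, Tendsto (F · x) atTop (𝓝 (f x))) :
    Tendsto (fun j => ∫ x in s, |F j x - f x| ∂μ) atTop (𝓝 0) := by
  have hFm : ∀ j, AEMeasurable (F j) (μ.restrict s) := fun j => (hF j).aemeasurable hs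
  have hfm : AEMeasurable f (μ.restrict s) :=
    aemeasurable_of_tendsto_metrizable_ae atTop hFm ((ae_restrict_iff' hs).2 (.of_forall hlim))
  have h := tendsto_integral_of_dominated_convergence (μ := μ.restrict s) (fun _ => B)
    (fun j => ((hFm j).sub hfm).aestronglyMeasurable.norm)
    (integrableOn_const hμs)
    (fun j => (ae_restrict_iff' hs).2 (.of_forall fun x hx => by simpa using hB j x hx))
    ((ae_restrict_iff' hs).2 (.of_forall fun x hx => by
      simpa using ((hlim x hx).sub_const (f x)).norm))
  simpa using h

theorem uniform_convergence_from_stability_general {d : ℕ}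
    (Ω : Set (EuclideanSpace ℝ (Fin d))) (hΩo : IsOpen Ω)
    (hΩb : Bornology.IsBounded Ω)
    (v : ℕ → EuclideanSpace ℝ (Fin d) → ℝ) (U : EuclideanSpace ℝ (Fin d) → ℝ)
    (hvcont : ∀ j, ContinuousOn (v j) (closure Ω))
    (hdec : ∀ j, ∀ x ∈ closure Ω, v (j + 1) x ≤ v j x)
    (hUb : ∃ M, ∀ x ∈ closure Ω, |U x| ≤ M)
    (hge : ∀ j, ∀ x ∈ closure Ω, U x ≤ v j x)
    (hlim : ∀ x ∈ closure Ω, Tendsto (fun j => v j x) atTop (𝓝 (U x)))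
    (hUfr : ContinuousOn U (frontier Ω))
    (C γ : ℝ) (hγ0 : 0 < γ)
    (hstab : ∀ j, sSup ((fun x => v j x - U x) '' Ω) ≤
      sSup ((fun x => v j x - U x) '' frontier Ω) +
        C * (∫ x in Ω, |v j x - U x|) ^ γ) :
    TendstoUniformlyOn (fun j x => v j x) U atTop (closure Ω) ∧
      ContinuousOn U (closure Ω) := by
  have hK : IsCompact (closure Ω) := hΩb.isCompact_closure
  have hfr : frontier Ω ⊆ closure Ω := frontier_subset_closure
  have hanti : ∀ x ∈ closure Ω, Antitone (v · x) := fun x hx =>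
    antitone_nat_of_succ_le fun j => hdec j x hx
  obtain ⟨B, hB⟩ := hK.exists_abs_sub_le_of_antitone (hvcont 0) hanti hge hUb
  have hbdry : ∀ ε > 0, ∀ᶠ j in atTop, ∀ x ∈ frontier Ω, v j x - U x < ε :=
    (tendstoUniformlyOn_iff_eventually_sub_lt fun j x hx => hge j x (hfr hx)).1 <|
      Antitone.tendstoUniformlyOn_of_forall_tendsto (hK.of_isClosed_subset isClosed_frontier hfr)
        (fun j => (hvcont j).mono hfr) (fun x hx => hanti x (hfr hx)) hUfr
        (fun x hx => hlim x (hfr hx))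
  have hL1 : Tendsto (fun j => C * (∫ x in Ω, |v j x - U x|) ^ γ) atTop (𝓝 0) := by
    have h := tendsto_setIntegral_abs_sub_of_abs_sub_le (μ := volume) hΩo.measurableSet
      hΩb.measure_lt_top.ne (fun j => (hvcont j).mono subset_closure)
      (fun j x hx => hB j x (subset_closure hx)) (fun x hx => hlim x (subset_closure hx))
    simpa [Real.zero_rpow hγ0.ne'] using (h.rpow_const (.inr hγ0.le)).const_mul C
  have huc : TendstoUniformlyOn v U atTop (closure Ω) := by
    refine (tendstoUniformlyOn_iff_eventually_sub_lt hge).2 fun ε hε => ?_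
    filter_upwards [hbdry (ε / 2) (half_pos hε), hL1.eventually_lt_const (half_pos hε)]
      with j hj_bdry hj_L1 x hx
    rw [closure_eq_self_union_frontier] at hx
    rcases hx with hxΩ | hxfr
    · have hbdd : BddAbove ((fun x => v j x - U x) '' Ω) := ⟨B, Set.forall_mem_image.2
        fun y hy => (le_abs_self _).trans (hB j y (subset_closure hy))⟩
      have := le_add_of_sSup_image_le_sSup_image_add hbdd (half_pos hε).le
        (fun y hy => (hj_bdry y hy).le) (hstab j) hxΩ
      linarith
    · linarith [hj_bdry x hxfr]
  exact ⟨huc, huc.continuousOn (.of_forall hvcont)⟩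

/-- **Uniform convergence from the stability estimate (Step 1 of Theorem 2.5).**
Let `Ω` be a bounded domain, `(v j)` a decreasing sequence of continuous functions on
`closure Ω` converging pointwise to the bounded function `U` on `closure Ω`, with `v j ≥ U`,
the limit being continuous on `∂Ω`.  If `sup_Ω (v j − U) ≤ sup_{∂Ω} (v j − U) + C‖v j − U‖₁^γ`
for all `j`, with `C > 0` and `0 < γ < 1`, then `v j → U` uniformly on `closure Ω`, and in
particular `U` is continuous on `closure Ω`. -/
theorem uniform_convergence_from_stability {d : ℕ}
    (Ω : Set (EuclideanSpace ℝ (Fin d))) (hΩo : IsOpen Ω) (hΩc : IsConnected Ω)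
    (hΩb : Bornology.IsBounded Ω)
    (v : ℕ → EuclideanSpace ℝ (Fin d) → ℝ) (U : EuclideanSpace ℝ (Fin d) → ℝ)
    (hvcont : ∀ j, ContinuousOn (v j) (closure Ω))
    (hdec : ∀ j, ∀ x ∈ closure Ω, v (j + 1) x ≤ v j x)
    (hUb : ∃ M, ∀ x ∈ closure Ω, |U x| ≤ M)
    (hge : ∀ j, ∀ x ∈ closure Ω, U x ≤ v j x)
    (hlim : ∀ x ∈ closure Ω, Tendsto (fun j => v j x) atTop (𝓝 (U x)))
    (hUfr : ContinuousOn U (frontier Ω))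
    (C γ : ℝ) (hC : 0 < C) (hγ0 : 0 < γ) (hγ1 : γ < 1)
    (hstab : ∀ j, sSup ((fun x => v j x - U x) '' Ω) ≤
      sSup ((fun x => v j x - U x) '' frontier Ω) +
        C * (∫ x in Ω, |v j x - U x|) ^ γ) :
    TendstoUniformlyOn (fun j x => v j x) U atTop (closure Ω) ∧
      ContinuousOn U (closure Ω) :=
  uniform_convergence_from_stability_general Ω hΩo hΩb v U hvcont hdec hUb hge hlim hUfr C γ hγ0
    hstab
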